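/- arXiv:1308.2611 — 4 statements merged into one kernel-verified Lean document; each statement's English description precedes it below -/
import Mathlib

section
/- Let L > 0, ε > 0, γ > 0, and let U : ℝ × ℝ → ℝ be a C⁴ function, 2L-periodic in x, satisfying the regularized Boussinesq–Ostrovsky equation U_tt − U_xx = ε( (1/2)(U²)_xx + U_ttxx − γU ) at every point. Define the mean value m(t) = (1/(2L)) ∫_{−L}^{L} U(x,t) dx, and set F₀ = m(0), V₀ = m′(0). Then for every t ∈ ℝ, m(t) = F₀ cos(√(εγ) t) + V₀ sin(√(εγ) t)/√(εγ). -/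
open MeasureTheory intervalIntegral

/-!
Integrating the equation over a period in `x` kills every term that is an `x`-derivative of a
periodic function: `(U²)_xx` and `U_xx` directly, and `U_ttxx` after pulling both time
derivatives out of the integral. What is left is `∫ U_tt = -εγ ∫ U`, i.e. the mean value obeys
the harmonic oscillator equation `m'' = -εγ m`, whose solutions are determined by `m(0)`, `m'(0)`.
-/

section PartialDerivatives

variable {f : ℝ × ℝ → ℝ} {m n : WithTop ℕ∞}

theorem ContDiff.deriv_snd (hf : ContDiff ℝ m f) (hnm : n + 1 ≤ m) :
    ContDiff ℝ n fun p : ℝ × ℝ => deriv (fun s => f (p.1, s)) p.2 :=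
  ContDiff.fderiv_apply (f := fun (p : ℝ × ℝ) (s : ℝ) => f (p.1, s))
    (hf.comp (contDiff_fst.fst.prodMk contDiff_snd)) contDiff_snd contDiff_const hnm

theorem ContDiff.iteratedDeriv_snd (k : ℕ) (hf : ContDiff ℝ m f) (hnk : n + k ≤ m) :
    ContDiff ℝ n fun p : ℝ × ℝ => iteratedDeriv k (fun s => f (p.1, s)) p.2 := by
  induction k generalizing f m with
  | zero => simpa using hf.of_le (by simpa using hnk)
  | succ k ih =>
    simp only [iteratedDeriv_succ']
    exact ih (hf.deriv_snd (n := n + k) (by simpa [add_assoc] using hnk)) le_rfl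

theorem ContDiff.iteratedDeriv_fst (k : ℕ) (hf : ContDiff ℝ m f) (hnk : n + k ≤ m) :
    ContDiff ℝ n fun p : ℝ × ℝ => iteratedDeriv k (fun y => f (y, p.2)) p.1 :=
  ((hf.comp (contDiff_snd.prodMk contDiff_fst)).iteratedDeriv_snd k hnk).comp
    (contDiff_snd.prodMk contDiff_fst)

end PartialDerivatives

theorem Function.Periodic.iteratedDeriv {g : ℝ → ℝ} {T : ℝ} (hg : Function.Periodic g T)
    (k : ℕ) : Function.Periodic (_root_.iteratedDeriv k g) T := fun x => by
  rw [← congrFun (iteratedDeriv_comp_add_const k g T) x]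
  exact congrArg (_root_.iteratedDeriv k · x) (funext hg)

theorem intervalIntegral_iteratedDeriv_succ_eq_zero_of_periodic {g : ℝ → ℝ} {T : ℝ}
    (hg : Function.Periodic g T) (k : ℕ) (hg' : ContDiff ℝ (k + 1) g) (a : ℝ) :
    ∫ x in a..a + T, iteratedDeriv (k + 1) g x = 0 := by
  have hderiv : ∀ x ∈ Set.uIcc a (a + T),
      HasDerivAt (iteratedDeriv k g) (iteratedDeriv (k + 1) g x) x := fun x _ => by
    rw [iteratedDeriv_succ]
    exact ((hg'.differentiable_iteratedDeriv k (by exact_mod_cast lt_add_one k)) x).hasDerivAt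
  rw [integral_eq_sub_of_hasDerivAt hderiv
    ((hg'.continuous_iteratedDeriv (k + 1) le_rfl).intervalIntegrable _ _),
    hg.iteratedDeriv k a, sub_self]

section ParametricIntegral

variable {G : ℝ × ℝ → ℝ} {a b : ℝ}

theorem hasDerivAt_intervalIntegral_of_contDiff (hG : ContDiff ℝ 1 G) (t : ℝ) :
    HasDerivAt (fun t => ∫ x in a..b, G (x, t))
      (∫ x in a..b, deriv (fun s => G (x, s)) t) t := by
  have hGt : Continuous fun p : ℝ × ℝ => deriv (fun s => G (p.1, s)) p.2 :=
    (hG.deriv_snd (n := 0) le_rfl).continuous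
  obtain ⟨C, hC⟩ :=
    (isCompact_uIcc.prod (isCompact_closedBall t 1)).exists_bound_of_continuousOn hGt.continuousOn
  have hsection : ∀ s, Continuous fun x => G (x, s) := fun s =>
    hG.continuous.comp (continuous_id.prodMk continuous_const)
  refine (hasDerivAt_integral_of_dominated_loc_of_deriv_le (bound := fun _ => C)
    (Metric.ball_mem_nhds t one_pos) (.of_forall fun s => (hsection s).aestronglyMeasurable)
    ((hsection t).intervalIntegrable _ _)
    (hGt.comp (continuous_id.prodMk continuous_const)).aestronglyMeasurable
    (.of_forall fun x hx s hs =>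
      hC (x, s) ⟨Set.uIoc_subset_uIcc hx, Metric.ball_subset_closedBall hs⟩)
    intervalIntegrable_const (.of_forall fun x _ s _ => ?_)).2
  exact ((hG.differentiable one_ne_zero).comp (differentiable_const x |>.prodMk
    differentiable_id) s).hasDerivAt

theorem iteratedDeriv_intervalIntegral_of_contDiff (k : ℕ) (hG : ContDiff ℝ k G) :
    iteratedDeriv k (fun t => ∫ x in a..b, G (x, t))
      = fun t => ∫ x in a..b, iteratedDeriv k (fun s => G (x, s)) t := by
  induction k generalizing G with
  | zero => simp
  | succ k ih =>
    have hderiv : deriv (fun t => ∫ x in a..b, G (x, t))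
        = fun t => ∫ x in a..b, deriv (fun s => G (x, s)) t :=
      funext fun t => (hasDerivAt_intervalIntegral_of_contDiff (hG.of_le (by simp)) t).deriv
    simp only [iteratedDeriv_succ', hderiv]
    exact ih (hG.deriv_snd le_rfl)

theorem intervalIntegral_iteratedDeriv_eq_zero_of_intervalIntegral_eq_zero (k : ℕ)
    (hG : ContDiff ℝ k G) (h : ∀ t, ∫ x in a..b, G (x, t) = 0) (t : ℝ) :
    ∫ x in a..b, iteratedDeriv k (fun s => G (x, s)) t = 0 := by
  rw [← congrFun (iteratedDeriv_intervalIntegral_of_contDiff k hG) t]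
  simp [h]

end ParametricIntegral


theorem eq_cos_add_sin_of_hasDerivAt_harmonic {y y' : ℝ → ℝ} {k : ℝ} (hk : k ≠ 0)
    (hy : ∀ t, HasDerivAt y (y' t) t) (hy' : ∀ t, HasDerivAt y' (-(k ^ 2) * y t) t) (t : ℝ) :
    y t = y 0 * Real.cos (k * t) + y' 0 * Real.sin (k * t) / k := by
  let A : ℝ × ℝ →L[ℝ] ℝ × ℝ :=
    (ContinuousLinearMap.snd ℝ ℝ ℝ).prod (-(k ^ 2) • ContinuousLinearMap.fst ℝ ℝ ℝ)
  have hA : ∀ p : ℝ × ℝ, A p = (p.2, -(k ^ 2) * p.1) := fun p => by simp [A]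
  let c : ℝ → ℝ × ℝ := fun t =>
    (y 0 * Real.cos (k * t) + y' 0 * Real.sin (k * t) / k,
      -(y 0 * k * Real.sin (k * t)) + y' 0 * Real.cos (k * t))
  have hc : ∀ t, HasDerivAt c (A (c t)) t := fun t => by
    have hkt : HasDerivAt (fun s => k * s) k t := by simpa using (hasDerivAt_id t).const_mul k
    have hcos := (Real.hasDerivAt_cos (k * t)).comp t hkt
    have hsin := (Real.hasDerivAt_sin (k * t)).comp t hkt
    rw [hA]
    refine ((hcos.const_mul _).add ((hsin.const_mul _).div_const k)).prodMk
      (((hsin.const_mul (y 0 * k)).neg).add (hcos.const_mul _)) |>.congr_deriv ?_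
    simp only [c, Prod.mk.injEq]
    constructor
    · field_simp
    · field_simp
      ring
  have hsol : (fun t => (y t, y' t)) = c :=
    ODE_solution_unique_univ (v := fun _ => A) (s := fun _ => Set.univ) (t₀ := 0)
      (fun _ => A.lipschitz.lipschitzOnWith)
      (fun t => ⟨by rw [hA]; exact (hy t).prodMk (hy' t), trivial⟩)
      (fun t => ⟨hc t, trivial⟩) (by simp [c])
  exact congrArg Prod.fst (congrFun hsol t)

def SolvesRegBoussinesqOstrovsky (ε γ : ℝ) (U : ℝ × ℝ → ℝ) : Prop :=
  ∀ x t : ℝ,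
    iteratedDeriv 2 (fun s => U (x, s)) t - iteratedDeriv 2 (fun y => U (y, t)) x
      = ε * ((1 / 2) * iteratedDeriv 2 (fun y => (U (y, t)) ^ 2) x
          + iteratedDeriv 2 (fun s => iteratedDeriv 2 (fun y => U (y, s)) x) t
          - γ * U (x, t))

theorem SolvesRegBoussinesqOstrovsky.intervalIntegral_iteratedDeriv_two_snd
    {ε γ L : ℝ} {U : ℝ × ℝ → ℝ} (hPDE : SolvesRegBoussinesqOstrovsky ε γ U)
    (hU : ContDiff ℝ 4 U) (hper : ∀ x t : ℝ, U (x + 2 * L, t) = U (x, t)) (t : ℝ) :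
    ∫ x in (-L)..L, iteratedDeriv 2 (fun s => U (x, s)) t
      = -(ε * γ) * ∫ x in (-L)..L, U (x, t) := by
  have hperiod : ∀ g : ℝ → ℝ, Function.Periodic g (2 * L) → ContDiff ℝ 2 g →
      ∫ x in (-L)..L, iteratedDeriv 2 g x = 0 := fun _ hg hg' => by
    simpa [show -L + 2 * L = L by ring] using
      intervalIntegral_iteratedDeriv_succ_eq_zero_of_periodic hg 1 hg' (-L)
  have hsection : ∀ s, ContDiff ℝ 4 fun y => U (y, s) := fun s =>
    hU.comp (contDiff_id.prodMk contDiff_const)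
  have hUxx : ContDiff ℝ 2 fun p : ℝ × ℝ => iteratedDeriv 2 (fun y => U (y, p.2)) p.1 :=
    hU.iteratedDeriv_fst 2 (by norm_num)
  have hA : ∀ s, ∫ x in (-L)..L, iteratedDeriv 2 (fun y => U (y, s)) x = 0 := fun s =>
    hperiod _ (fun x => hper x s) ((hsection s).of_le (by norm_num))
  have hB : ∫ x in (-L)..L, iteratedDeriv 2 (fun y => (U (y, t)) ^ 2) x = 0 :=
    hperiod _ (fun x => by simp only [hper x t]) (((hsection t).pow 2).of_le (by norm_num))
  have hC : ∫ x in (-L)..L, iteratedDeriv 2 (fun s => iteratedDeriv 2 (fun y => U (y, s)) x) t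
      = 0 :=
    intervalIntegral_iteratedDeriv_eq_zero_of_intervalIntegral_eq_zero 2 hUxx hA t
  have iA : IntervalIntegrable (fun x => iteratedDeriv 2 (fun y => U (y, t)) x) volume (-L) L :=
    ((hsection t).continuous_iteratedDeriv 2 (by norm_num)).intervalIntegrable _ _
  have iB : IntervalIntegrable (fun x => iteratedDeriv 2 (fun y => (U (y, t)) ^ 2) x)
      volume (-L) L :=
    (((hsection t).pow 2).continuous_iteratedDeriv 2 (by norm_num)).intervalIntegrable _ _
  have iC : IntervalIntegrable
      (fun x => iteratedDeriv 2 (fun s => iteratedDeriv 2 (fun y => U (y, s)) x) t) volume (-L) L :=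
    ((hUxx.iteratedDeriv_snd (n := 0) 2 (by simp)).continuous.comp
      (continuous_id.prodMk continuous_const)).intervalIntegrable _ _
  have iU : IntervalIntegrable (fun x => U (x, t)) volume (-L) L :=
    (hsection t).continuous.intervalIntegrable _ _
  calc _ = ∫ x in (-L)..L, iteratedDeriv 2 (fun y => U (y, t)) x
          + ε * ((1 / 2) * iteratedDeriv 2 (fun y => (U (y, t)) ^ 2) x
            + iteratedDeriv 2 (fun s => iteratedDeriv 2 (fun y => U (y, s)) x) t
            - γ * U (x, t)) :=
        integral_congr fun x _ => by linarith [hPDE x t]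
    _ = -(ε * γ) * ∫ x in (-L)..L, U (x, t) := by
      rw [integral_add iA ((((iB.const_mul _).add iC).sub (iU.const_mul _)).const_mul _),
        intervalIntegral.integral_const_mul,
        integral_sub ((iB.const_mul _).add iC) (iU.const_mul _),
        integral_add (iB.const_mul _) iC, intervalIntegral.integral_const_mul,
        intervalIntegral.integral_const_mul, hA, hB, hC]
      ring

theorem mean_value_oscillation_general
    (L ε γ : ℝ) (hε : 0 < ε) (hγ : 0 < γ)
    (U : ℝ × ℝ → ℝ)
    (hU : ContDiff ℝ 4 U)
    (hper : ∀ x t : ℝ, U (x + 2 * L, t) = U (x, t))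
    (hPDE : ∀ x t : ℝ,
      iteratedDeriv 2 (fun s => U (x, s)) t
        - iteratedDeriv 2 (fun y => U (y, t)) x
      = ε * ((1 / 2) * iteratedDeriv 2 (fun y => (U (y, t)) ^ 2) x
          + iteratedDeriv 2 (fun s => iteratedDeriv 2 (fun y => U (y, s)) x) t
          - γ * U (x, t)))
    (m : ℝ → ℝ)
    (hm : m = fun t => (1 / (2 * L)) * ∫ x in (-L)..L, U (x, t))
    (F₀ V₀ : ℝ) (hF₀ : F₀ = m 0) (hV₀ : V₀ = deriv m 0) :
    ∀ t : ℝ,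
      m t = F₀ * Real.cos (Real.sqrt (ε * γ) * t)
          + V₀ * Real.sin (Real.sqrt (ε * γ) * t) / Real.sqrt (ε * γ) := by
  have hεγ : 0 < ε * γ := mul_pos hε hγ
  let m' : ℝ → ℝ := fun t => (1 / (2 * L)) * ∫ x in (-L)..L, deriv (fun s => U (x, s)) t
  have hm' : ∀ t, HasDerivAt m (m' t) t := fun t => by
    subst hm
    exact (hasDerivAt_intervalIntegral_of_contDiff (hU.of_le (by norm_num)) t).const_mul _
  have hm'' : ∀ t, HasDerivAt m' (-(Real.sqrt (ε * γ) ^ 2) * m t) t := fun t => by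
    have hUtt : ∫ x in (-L)..L, deriv (deriv fun s => U (x, s)) t
        = -(ε * γ) * ∫ x in (-L)..L, U (x, t) := by
      simpa only [iteratedDeriv_succ, iteratedDeriv_zero] using
        SolvesRegBoussinesqOstrovsky.intervalIntegral_iteratedDeriv_two_snd hPDE hU hper t
    have h :
        HasDerivAt m' ((1 / (2 * L)) * ∫ x in (-L)..L, deriv (deriv fun s => U (x, s)) t) t :=
      (hasDerivAt_intervalIntegral_of_contDiff (hU.deriv_snd (n := 1) (by norm_num)) t).const_mul _
    rw [hUtt] at h
    convert h using 1
    rw [Real.sq_sqrt hεγ.le, hm]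
    ring
  intro t
  rw [eq_cos_add_sin_of_hasDerivAt_harmonic (Real.sqrt_pos.2 hεγ).ne' hm' hm'' t, hF₀, hV₀,
    (hm' 0).deriv]

/-- For a C⁴, 2L-periodic (in x) solution U of the regularized
Boussinesq–Ostrovsky equation with γ > 0, the mean value
  m(t) = (1/(2L)) ∫_{−L}^{L} U(x,t) dx
satisfies m(t) = F₀ cos(√(εγ) t) + V₀ sin(√(εγ) t)/√(εγ), where
F₀ = m(0) and V₀ = m′(0). -/
theorem mean_value_oscillation
    (L ε γ : ℝ) (hL : 0 < L) (hε : 0 < ε) (hγ : 0 < γ)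
    (U : ℝ × ℝ → ℝ)
    (hU : ContDiff ℝ 4 U)
    (hper : ∀ x t : ℝ, U (x + 2 * L, t) = U (x, t))
    (hPDE : ∀ x t : ℝ,
      iteratedDeriv 2 (fun s => U (x, s)) t
        - iteratedDeriv 2 (fun y => U (y, t)) x
      = ε * ((1 / 2) * iteratedDeriv 2 (fun y => (U (y, t)) ^ 2) x
          + iteratedDeriv 2 (fun s => iteratedDeriv 2 (fun y => U (y, s)) x) t
          - γ * U (x, t)))
    (m : ℝ → ℝ)
    (hm : m = fun t => (1 / (2 * L)) * ∫ x in (-L)..L, U (x, t))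
    (F₀ V₀ : ℝ) (hF₀ : F₀ = m 0) (hV₀ : V₀ = deriv m 0) :
    ∀ t : ℝ,
      m t = F₀ * Real.cos (Real.sqrt (ε * γ) * t)
          + V₀ * Real.sin (Real.sqrt (ε * γ) * t) / Real.sqrt (ε * γ) :=
  mean_value_oscillation_general L ε γ hε hγ U hU hper hPDE m hm F₀ V₀ hF₀ hV₀
end

section
/- Let L > 0, ε > 0, γ ≥ 0, and let U : ℝ × ℝ → ℝ be a C⁴ function, 2L-periodic in x, satisfying the regularized Boussinesq–Ostrovsky equation U_tt − U_xx = ε( (1/2)(U²)_xx + U_ttxx − γU ) at every point. Define the energy E(t) = ∫_{−L}^{L} ( U_t² + U_x² + εγ U² + ε U_tx² + ε U U_x² ) dx. Then for every t, E′(t) = ε ∫_{−L}^{L} U_t U_x² dx. -/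
/-!
Multiplying the equation by `2 U_t` and applying the product rule, the time derivative of the
energy density `U_t² + U_x² + εγU² + εU_tx² + εUU_x²` becomes `ε U_t U_x²` plus the
`x`-derivative of the flux `2 U_t U_x (1 + εU) + 2ε U_t U_ttx`. After differentiating under the
integral sign, the flux term integrates to zero over a period.
-/

open MeasureTheory intervalIntegral

noncomputable def partialX (f : ℝ × ℝ → ℝ) : ℝ × ℝ → ℝ := fun p => fderiv ℝ f p (1, 0)

noncomputable def partialT (f : ℝ × ℝ → ℝ) : ℝ × ℝ → ℝ := fun p => fderiv ℝ f p (0, 1)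

local notation "∂ₓ" => partialX
local notation "∂ₜ" => partialT

section PartialDerivatives

variable {f : ℝ × ℝ → ℝ}

theorem hasDerivAt_partialX {x t : ℝ} (hf : DifferentiableAt ℝ f (x, t)) :
    HasDerivAt (fun y => f (y, t)) (∂ₓ f (x, t)) x := by
  simpa [partialX, Function.comp_def] using
    hf.hasFDerivAt.comp_hasDerivAt x ((hasDerivAt_id x).prodMk (hasDerivAt_const x t))

theorem hasDerivAt_partialT {x t : ℝ} (hf : DifferentiableAt ℝ f (x, t)) :
    HasDerivAt (fun s => f (x, s)) (∂ₜ f (x, t)) t := by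
  simpa [partialT, Function.comp_def] using
    hf.hasFDerivAt.comp_hasDerivAt t ((hasDerivAt_const t x).prodMk (hasDerivAt_id t))

theorem deriv_sliceX (hf : Differentiable ℝ f) (t : ℝ) :
    deriv (fun y => f (y, t)) = fun y => ∂ₓ f (y, t) :=
  funext fun y => (hasDerivAt_partialX (hf (y, t))).deriv

theorem deriv_sliceT (hf : Differentiable ℝ f) (x : ℝ) :
    deriv (fun s => f (x, s)) = fun s => ∂ₜ f (x, s) :=
  funext fun s => (hasDerivAt_partialT (hf (x, s))).deriv

theorem partialX_eq {g : ℝ × ℝ → ℝ} (hf : Differentiable ℝ f)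
    (hg : ∀ x t, HasDerivAt (fun y => f (y, t)) (g (x, t)) x) : ∂ₓ f = g :=
  funext fun ⟨x, t⟩ => (hasDerivAt_partialX (hf (x, t))).unique (hg x t)

theorem partialT_eq {g : ℝ × ℝ → ℝ} (hf : Differentiable ℝ f)
    (hg : ∀ x t, HasDerivAt (fun s => f (x, s)) (g (x, t)) t) : ∂ₜ f = g :=
  funext fun ⟨x, t⟩ => (hasDerivAt_partialT (hf (x, t))).unique (hg x t)

theorem ContDiff.partialX {n : ℕ} (hf : ContDiff ℝ (n + 1) f) : ContDiff ℝ n (∂ₓ f) :=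
  (ContinuousLinearMap.apply ℝ ℝ ((1 : ℝ), (0 : ℝ))).contDiff.comp (hf.fderiv_right le_rfl)

theorem ContDiff.partialT {n : ℕ} (hf : ContDiff ℝ (n + 1) f) : ContDiff ℝ n (∂ₜ f) :=
  (ContinuousLinearMap.apply ℝ ℝ ((0 : ℝ), (1 : ℝ))).contDiff.comp (hf.fderiv_right le_rfl)

theorem partialX_partialT_comm (hf : ContDiff ℝ 2 f) : ∂ₓ (∂ₜ f) = ∂ₜ (∂ₓ f) := by
  funext p
  have hdiff : DifferentiableAt ℝ (fderiv ℝ f) p :=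
    ((hf.fderiv_right (m := 1) le_rfl).differentiable one_ne_zero).differentiableAt
  change fderiv ℝ (fun q => fderiv ℝ f q (0, 1)) p (1, 0)
    = fderiv ℝ (fun q => fderiv ℝ f q (1, 0)) p (0, 1)
  rw [fderiv_clm_apply hdiff (differentiableAt_const _),
    fderiv_clm_apply hdiff (differentiableAt_const _)]
  simpa using (hf.contDiffAt.isSymmSndFDerivAt (by simp)).eq (1, 0) (0, 1)

theorem Function.Periodic.partialX {c : ℝ × ℝ} (hf : Function.Periodic f c) :
    Function.Periodic (∂ₓ f) c := fun p => by
  simp only [_root_.partialX, ← fderiv_comp_add_right, hf.funext]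

theorem Function.Periodic.partialT {c : ℝ × ℝ} (hf : Function.Periodic f c) :
    Function.Periodic (∂ₜ f) c := fun p => by
  simp only [_root_.partialT, ← fderiv_comp_add_right, hf.funext]

theorem iteratedDeriv_two_sliceX (hf : ContDiff ℝ 2 f) (x t : ℝ) :
    iteratedDeriv 2 (fun y => f (y, t)) x = ∂ₓ (∂ₓ f) (x, t) := by
  rw [iteratedDeriv_succ, iteratedDeriv_one, deriv_sliceX (hf.differentiable two_ne_zero),
    deriv_sliceX ((hf.partialX (n := 1)).differentiable one_ne_zero)]

theorem iteratedDeriv_two_sliceT (hf : ContDiff ℝ 2 f) (x t : ℝ) :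
    iteratedDeriv 2 (fun s => f (x, s)) t = ∂ₜ (∂ₜ f) (x, t) := by
  rw [iteratedDeriv_succ, iteratedDeriv_one, deriv_sliceT (hf.differentiable two_ne_zero),
    deriv_sliceT ((hf.partialT (n := 1)).differentiable one_ne_zero)]

theorem partialX_partialX_sq (hf : ContDiff ℝ 2 f) :
    ∂ₓ (∂ₓ fun p => f p ^ 2) = fun p => 2 * ∂ₓ f p ^ 2 + 2 * f p * ∂ₓ (∂ₓ f) p := by
  have hf1 : Differentiable ℝ f := hf.differentiable two_ne_zero
  have hfx : Differentiable ℝ (∂ₓ f) := (hf.partialX (n := 1)).differentiable one_ne_zero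
  have hsq : ∂ₓ (fun p => f p ^ 2) = fun p => 2 * f p * ∂ₓ f p :=
    partialX_eq (hf1.pow 2) fun x t =>
      ((hasDerivAt_partialX (hf1 (x, t))).fun_pow 2).congr_deriv (by norm_num)
  refine hsq ▸ partialX_eq (by fun_prop) fun x t => ?_
  exact (((hasDerivAt_partialX (hf1 (x, t))).const_mul 2).fun_mul
    (hasDerivAt_partialX (hfx (x, t)))).congr_deriv (by ring)

theorem hasDerivAt_integral_partialT {F : ℝ × ℝ → ℝ} (hF : ContDiff ℝ 1 F) (a b t₀ : ℝ) :
    HasDerivAt (fun t => ∫ x in a..b, F (x, t)) (∫ x in a..b, ∂ₜ F (x, t₀)) t₀ := by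
  have hF' : Continuous (∂ₜ F) := (hF.partialT (n := 0)).continuous
  obtain ⟨C, hC⟩ := (isCompact_uIcc.prod (isCompact_closedBall t₀ 1)).exists_bound_of_continuousOn
    hF'.continuousOn
  exact (intervalIntegral.hasDerivAt_integral_of_dominated_loc_of_deriv_le (bound := fun _ => C)
    (Metric.ball_mem_nhds t₀ one_pos)
    (.of_forall fun _ => hF.continuous.curry_left.aestronglyMeasurable)
    (hF.continuous.curry_left.intervalIntegrable _ _) hF'.curry_left.aestronglyMeasurable
    (ae_of_all _ fun x hx t ht =>
      hC (x, t) ⟨Set.uIoc_subset_uIcc hx, Metric.ball_subset_closedBall ht⟩)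
    intervalIntegrable_const
    (ae_of_all _ fun x _ t _ => hasDerivAt_partialT (hF.differentiable one_ne_zero (x, t)))).2

theorem integral_partialX_eq_zero_of_periodic {G : ℝ × ℝ → ℝ} (hG : ContDiff ℝ 1 G) {a b : ℝ}
    (hper : Function.Periodic G (b - a, 0)) (t : ℝ) : ∫ x in a..b, ∂ₓ G (x, t) = 0 := by
  have hb : G (b, t) = G (a, t) := by simpa using hper (a, t)
  rw [integral_eq_sub_of_hasDerivAt
    (fun x _ => hasDerivAt_partialX (hG.differentiable one_ne_zero (x, t)))
    ((hG.partialX (n := 0)).continuous.curry_left.intervalIntegrable _ _), hb, sub_self]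

end PartialDerivatives

section Energy

variable (ε γ : ℝ) (U : ℝ × ℝ → ℝ)

noncomputable def energyDensity (p : ℝ × ℝ) : ℝ :=
  ∂ₜ U p ^ 2 + ∂ₓ U p ^ 2 + ε * γ * U p ^ 2 + ε * ∂ₜ (∂ₓ U) p ^ 2 + ε * U p * ∂ₓ U p ^ 2

noncomputable def energyFlux (p : ℝ × ℝ) : ℝ :=
  2 * ∂ₜ U p * ∂ₓ U p * (1 + ε * U p) + 2 * ε * ∂ₜ U p * ∂ₜ (∂ₜ (∂ₓ U)) p

-- The nonlinear term `(U²)_xx / 2` is written out as `U_x² + U U_xx`.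
def IsBoussinesqOstrovskySolution : Prop :=
  ∀ p, ∂ₜ (∂ₜ U) p - ∂ₓ (∂ₓ U) p
    = ε * (∂ₓ U p ^ 2 + U p * ∂ₓ (∂ₓ U) p + ∂ₜ (∂ₜ (∂ₓ (∂ₓ U))) p - γ * U p)

variable {U}

theorem contDiff_energyDensity (hU : ContDiff ℝ 3 U) : ContDiff ℝ 1 (energyDensity ε γ U) := by
  have hUx : ContDiff ℝ 2 (∂ₓ U) := hU.partialX
  have : ContDiff ℝ 1 (∂ₜ (∂ₓ U)) := hUx.partialT
  have : ContDiff ℝ 1 (∂ₓ U) := hUx.of_le (by norm_num)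
  have : ContDiff ℝ 1 (∂ₜ U) := (hU.partialT (n := 2)).of_le (by norm_num)
  have : ContDiff ℝ 1 U := hU.of_le (by norm_num)
  unfold energyDensity
  fun_prop

theorem contDiff_energyFlux (hU : ContDiff ℝ 4 U) : ContDiff ℝ 1 (energyFlux ε U) := by
  have hUx : ContDiff ℝ 3 (∂ₓ U) := hU.partialX
  have : ContDiff ℝ 1 (∂ₜ (∂ₜ (∂ₓ U))) := (hUx.partialT (n := 2)).partialT
  have : ContDiff ℝ 1 (∂ₓ U) := hUx.of_le (by norm_num)
  have : ContDiff ℝ 1 (∂ₜ U) := (hU.partialT (n := 3)).of_le (by norm_num)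
  have : ContDiff ℝ 1 U := hU.of_le (by norm_num)
  unfold energyFlux
  fun_prop

theorem partialT_energyDensity (hU : ContDiff ℝ 3 U) :
    ∂ₜ (energyDensity ε γ U) = fun p =>
      2 * ∂ₜ U p * ∂ₜ (∂ₜ U) p + 2 * ∂ₓ U p * ∂ₜ (∂ₓ U) p + 2 * ε * γ * U p * ∂ₜ U p
        + 2 * ε * ∂ₜ (∂ₓ U) p * ∂ₜ (∂ₜ (∂ₓ U)) p + ε * ∂ₜ U p * ∂ₓ U p ^ 2
        + 2 * ε * U p * ∂ₓ U p * ∂ₜ (∂ₓ U) p := by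
  have hU₀ : Differentiable ℝ U := hU.differentiable (by norm_num)
  have hUt : Differentiable ℝ (∂ₜ U) := (hU.partialT (n := 2)).differentiable (by norm_num)
  have hUx : Differentiable ℝ (∂ₓ U) := (hU.partialX (n := 2)).differentiable (by norm_num)
  have hUxt : Differentiable ℝ (∂ₜ (∂ₓ U)) :=
    ((hU.partialX (n := 2)).partialT (n := 1)).differentiable one_ne_zero
  refine partialT_eq ((contDiff_energyDensity ε γ hU).differentiable one_ne_zero) fun x t => ?_
  have dU := hasDerivAt_partialT (hU₀ (x, t))
  have dUt := hasDerivAt_partialT (hUt (x, t))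
  have dUx := hasDerivAt_partialT (hUx (x, t))
  have dUxt := hasDerivAt_partialT (hUxt (x, t))
  refine ((((dUt.fun_pow 2).add (dUx.fun_pow 2)).add ((dU.fun_pow 2).const_mul (ε * γ))).add
    ((dUxt.fun_pow 2).const_mul ε)).add ((dU.const_mul ε).fun_mul (dUx.fun_pow 2)) |>.congr_deriv ?_
  norm_num
  ring

theorem partialX_energyFlux (hU : ContDiff ℝ 4 U) :
    ∂ₓ (energyFlux ε U) = fun p =>
      2 * ∂ₜ (∂ₓ U) p * ∂ₓ U p * (1 + ε * U p) + 2 * ∂ₜ U p * ∂ₓ (∂ₓ U) p * (1 + ε * U p)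
        + 2 * ε * ∂ₜ U p * ∂ₓ U p ^ 2 + 2 * ε * ∂ₜ (∂ₓ U) p * ∂ₜ (∂ₜ (∂ₓ U)) p
        + 2 * ε * ∂ₜ U p * ∂ₜ (∂ₜ (∂ₓ (∂ₓ U))) p := by
  have hUx : ContDiff ℝ 3 (∂ₓ U) := hU.partialX
  have hUxt : ContDiff ℝ 2 (∂ₜ (∂ₓ U)) := hUx.partialT
  have hUxtt : ContDiff ℝ 1 (∂ₜ (∂ₜ (∂ₓ U))) := hUxt.partialT
  have hUt : ContDiff ℝ 3 (∂ₜ U) := hU.partialT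
  have commUt : ∂ₓ (∂ₜ U) = ∂ₜ (∂ₓ U) := partialX_partialT_comm (hU.of_le (by norm_num))
  have commUxtt : ∂ₓ (∂ₜ (∂ₜ (∂ₓ U))) = ∂ₜ (∂ₜ (∂ₓ (∂ₓ U))) := by
    rw [partialX_partialT_comm hUxt, partialX_partialT_comm (hUx.of_le (by norm_num))]
  refine partialX_eq ((contDiff_energyFlux ε hU).differentiable one_ne_zero) fun x t => ?_
  have dU := hasDerivAt_partialX ((hU.differentiable (by norm_num)) (x, t))
  have dUt := hasDerivAt_partialX ((hUt.differentiable (by norm_num)) (x, t))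
  have dUx := hasDerivAt_partialX ((hUx.differentiable (by norm_num)) (x, t))
  have dUxtt := hasDerivAt_partialX ((hUxtt.differentiable (by norm_num)) (x, t))
  rw [commUt] at dUt
  rw [commUxtt] at dUxtt
  refine ((((dUt.const_mul 2).fun_mul dUx).fun_mul ((dU.const_mul ε).const_add 1)).add
    ((dUt.const_mul (2 * ε)).fun_mul dUxtt)) |>.congr_deriv ?_
  ring

theorem partialT_energyDensity_eq_add_partialX_energyFlux (hU : ContDiff ℝ 4 U)
    (hsol : IsBoussinesqOstrovskySolution ε γ U) :
    ∂ₜ (energyDensity ε γ U) = fun p => ε * ∂ₜ U p * ∂ₓ U p ^ 2 + ∂ₓ (energyFlux ε U) p := by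
  rw [partialT_energyDensity ε γ (hU.of_le (by norm_num)), partialX_energyFlux ε hU]
  funext p
  linear_combination 2 * ∂ₜ U p * hsol p

theorem Function.Periodic.energyFlux {c : ℝ × ℝ} (hU : Function.Periodic U c) :
    Function.Periodic (energyFlux ε U) c := fun p => by
  simp only [_root_.energyFlux, hU p, hU.partialX p, hU.partialT p,
    hU.partialX.partialT.partialT p]

theorem hasDerivAt_integral_energyDensity {a b : ℝ} (hU : ContDiff ℝ 4 U)
    (hsol : IsBoussinesqOstrovskySolution ε γ U) (hper : Function.Periodic U (b - a, 0)) (t : ℝ) :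
    HasDerivAt (fun t => ∫ x in a..b, energyDensity ε γ U (x, t))
      (ε * ∫ x in a..b, ∂ₜ U (x, t) * ∂ₓ U (x, t) ^ 2) t := by
  have hflux := contDiff_energyFlux ε hU
  have hUt : Continuous (∂ₜ U) := (hU.partialT (n := 3)).continuous
  have hUx : Continuous (∂ₓ U) := (hU.partialX (n := 3)).continuous
  have hfluxX : Continuous (∂ₓ (energyFlux ε U)) := (hflux.partialX (n := 0)).continuous
  convert hasDerivAt_integral_partialT (contDiff_energyDensity ε γ (hU.of_le (by norm_num))) a b t
    using 1
  rw [partialT_energyDensity_eq_add_partialX_energyFlux ε γ hU hsol]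
  dsimp only
  rw [integral_add (Continuous.intervalIntegrable (by fun_prop) _ _)
      (Continuous.intervalIntegrable (by fun_prop) _ _),
    integral_partialX_eq_zero_of_periodic hflux (hper.energyFlux ε) t, add_zero]
  simp only [mul_assoc, intervalIntegral.integral_const_mul]

end Energy

theorem energy_balance_general
    (L ε γ : ℝ)
    (U : ℝ × ℝ → ℝ)
    (hU : ContDiff ℝ 4 U)
    (hper : ∀ x t : ℝ, U (x + 2 * L, t) = U (x, t))
    (hPDE : ∀ x t : ℝ,
      iteratedDeriv 2 (fun s => U (x, s)) t
        - iteratedDeriv 2 (fun y => U (y, t)) x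
      = ε * ((1 / 2) * iteratedDeriv 2 (fun y => (U (y, t)) ^ 2) x
          + iteratedDeriv 2 (fun s => iteratedDeriv 2 (fun y => U (y, s)) x) t
          - γ * U (x, t)))
    (E : ℝ → ℝ)
    (hE : E = fun t => ∫ x in (-L)..L,
      ((deriv (fun s => U (x, s)) t) ^ 2
        + (deriv (fun y => U (y, t)) x) ^ 2
        + ε * γ * (U (x, t)) ^ 2
        + ε * (deriv (fun s => deriv (fun y => U (y, s)) x) t) ^ 2
        + ε * U (x, t) * (deriv (fun y => U (y, t)) x) ^ 2)) :
    ∀ t : ℝ,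
      deriv E t
        = ε * ∫ x in (-L)..L,
            deriv (fun s => U (x, s)) t * (deriv (fun y => U (y, t)) x) ^ 2 := by
  have hU₂ : ContDiff ℝ 2 U := hU.of_le (by norm_num)
  have hUxx : ContDiff ℝ 2 (∂ₓ (∂ₓ U)) := (hU.partialX (n := 3)).partialX
  have hsol : IsBoussinesqOstrovskySolution ε γ U := fun ⟨x, t⟩ => by
    have h := hPDE x t
    simp only [iteratedDeriv_two_sliceX hU₂, iteratedDeriv_two_sliceT hU₂,
      iteratedDeriv_two_sliceT hUxx, iteratedDeriv_two_sliceX (hU₂.pow 2),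
      partialX_partialX_sq hU₂] at h
    linear_combination h
  have hUper : Function.Periodic U (L - -L, 0) := fun ⟨x, t⟩ => by simpa [two_mul] using hper x t
  have hU₁ : Differentiable ℝ U := hU.differentiable (by norm_num)
  have hUx₁ : Differentiable ℝ (∂ₓ U) := (hU.partialX (n := 3)).differentiable (by norm_num)
  have hE' : E = fun t => ∫ x in (-L)..L, energyDensity ε γ U (x, t) := by
    simp only [hE, energyDensity, deriv_sliceX hU₁, deriv_sliceT hU₁, deriv_sliceT hUx₁]
  intro t
  rw [hE', (hasDerivAt_integral_energyDensity ε γ hU hsol hUper t).deriv]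
  simp only [deriv_sliceX hU₁, deriv_sliceT hU₁]

/-- For a C⁴, 2L-periodic (in x) solution U of the regularized
Boussinesq–Ostrovsky equation, the energy
  E(t) = ∫_{−L}^{L} ( U_t² + U_x² + εγU² + εU_tx² + εU U_x² ) dx
satisfies E′(t) = ε ∫_{−L}^{L} U_t U_x² dx. -/
theorem energy_balance
    (L ε γ : ℝ) (hL : 0 < L) (hε : 0 < ε) (hγ : 0 ≤ γ)
    (U : ℝ × ℝ → ℝ)
    (hU : ContDiff ℝ 4 U)
    (hper : ∀ x t : ℝ, U (x + 2 * L, t) = U (x, t))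
    (hPDE : ∀ x t : ℝ,
      iteratedDeriv 2 (fun s => U (x, s)) t
        - iteratedDeriv 2 (fun y => U (y, t)) x
      = ε * ((1 / 2) * iteratedDeriv 2 (fun y => (U (y, t)) ^ 2) x
          + iteratedDeriv 2 (fun s => iteratedDeriv 2 (fun y => U (y, s)) x) t
          - γ * U (x, t)))
    (E : ℝ → ℝ)
    (hE : E = fun t => ∫ x in (-L)..L,
      ((deriv (fun s => U (x, s)) t) ^ 2
        + (deriv (fun y => U (y, t)) x) ^ 2
        + ε * γ * (U (x, t)) ^ 2
        + ε * (deriv (fun s => deriv (fun y => U (y, s)) x) t) ^ 2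
        + ε * U (x, t) * (deriv (fun y => U (y, t)) x) ^ 2)) :
    ∀ t : ℝ,
      deriv E t
        = ε * ∫ x in (-L)..L,
            deriv (fun s => U (x, s)) t * (deriv (fun y => U (y, t)) x) ^ 2 :=
  energy_balance_general L ε γ U hU hper hPDE E hE
end

section
/- Let n be a nonzero integer and let a : ℤ → ℂ be a sequence with a(0) = 0 and |a(−k)| = |a(k)| for all k ∈ ℤ, such that the family k ↦ |k|·|a(k)|² is summable over ℤ. Then the family k ↦ ((n−k)²/(4nk))·|a(k)|² (with the convention that the term at k = 0 is 0) is summable over ℤ and ∑_{k∈ℤ} ((n−k)²/(4nk))·|a(k)|² = −(1/2) ∑_{k∈ℤ} |a(k)|². (This identity reduces the resonance sum in the second-order expansion to a multiple of f^±, giving f_s^± = (1/2) f^± ∑_k |a_k^∓|².) -/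
/-!
For `k ≠ 0` the weight splits as `(n - k)² / (4nk) = n / (4k) + k / (4n) - 1/2`. Against the even
weight `|a k|²` the first two pieces are odd in `k`, so their sums over `ℤ` vanish, and only
`-1/2 ∑ |a k|²` survives. All three pieces are summable because dividing by a nonzero integer
does not increase absolute values, and `|a k|² = k |a k|² / k` for every `k` once `a 0 = 0`.
-/

theorem Function.Odd.tsum_eq_zero {α β : Type*} [InvolutiveNeg α] [AddCommGroup β]
    [IsAddTorsionFree β] [TopologicalSpace β] [IsTopologicalAddGroup β] [T2Space β]
    {f : α → β} (hf : f.Odd) : ∑' a, f a = 0 := by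
  rw [← neg_eq_self, ← tsum_neg, ← (Equiv.neg α).tsum_eq f]
  exact tsum_congr fun a => (hf a).symm

theorem Summable.div_intCast {ι : Type*} {f : ι → ℝ} (hf : Summable f) (m : ι → ℤ) :
    Summable fun i => f i / m i := by
  refine .of_norm_bounded hf.abs fun i => ?_
  rcases eq_or_ne (m i) 0 with hm | hm
  · simp [hm]
  · rw [Real.norm_eq_abs, abs_div, ← Int.cast_abs]
    exact div_le_self (abs_nonneg _) (mod_cast Int.one_le_abs hm)

theorem resonance_weight_mul_eq {n k x : ℝ} (hn : n ≠ 0) (hk : k = 0 → x = 0) :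
    (n - k) ^ 2 / (4 * n * k) * x = n / 4 * (x / k) + k * x / (4 * n) - x / 2 := by
  rcases eq_or_ne k 0 with rfl | hk'
  · simp [hk rfl]
  · field_simp
    ring

/-- If a : ℤ → ℂ satisfies a(0) = 0, |a(−k)| = |a(k)|, and
k ↦ |k||a(k)|² is summable, then k ↦ ((n−k)²/(4nk))|a(k)|² is summable and
∑_{k∈ℤ} ((n−k)²/(4nk))|a(k)|² = −(1/2)∑_{k∈ℤ}|a(k)|². -/
theorem resonance_sum_identity
    (n : ℤ) (hn : n ≠ 0) (a : ℤ → ℂ)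
    (ha0 : a 0 = 0)
    (hsym : ∀ k : ℤ, ‖a (-k)‖ = ‖a k‖)
    (hsum : Summable (fun k : ℤ => (|k| : ℝ) * ‖a k‖ ^ 2)) :
    Summable (fun k : ℤ => (((n : ℝ) - k) ^ 2 / (4 * n * k)) * ‖a k‖ ^ 2) ∧
      ∑' k : ℤ, (((n : ℝ) - k) ^ 2 / (4 * n * k)) * ‖a k‖ ^ 2
        = -(1 / 2) * ∑' k : ℤ, ‖a k‖ ^ 2 := by
  set f : ℤ → ℝ := fun k => ‖a k‖ ^ 2
  have hf_even : f.Even := fun k => by simp only [f, hsym]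
  have hkf : Summable fun k : ℤ => (k : ℝ) * f k :=
    summable_abs_iff.mp (hsum.congr fun k => by simp [f, abs_mul])
  have hf : Summable f := by
    refine (hkf.div_intCast fun k => k).congr fun k => ?_
    rcases eq_or_ne k 0 with rfl | hk
    · simp [f, ha0]
    · simp [hk]
  have hdecomp : ∀ k : ℤ, ((n : ℝ) - k) ^ 2 / (4 * n * k) * f k
      = n / 4 * (f k / k) + k * f k / (4 * n) - f k / 2 := fun k =>
    resonance_weight_mul_eq (mod_cast hn) fun hk => by
      simp [f, show k = 0 by exact_mod_cast hk, ha0]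
  have hodd_div : Function.Odd fun k : ℤ => f k / k := fun k => by
    simp only [hf_even k, Int.cast_neg, div_neg]
  have hodd_mul : Function.Odd fun k : ℤ => (k : ℝ) * f k := fun k => by
    simp only [hf_even k, Int.cast_neg, neg_mul]
  have h_div : Summable fun k : ℤ => n / 4 * (f k / k) := (hf.div_intCast fun k => k).mul_left _
  have h_mul : Summable fun k : ℤ => k * f k / (4 * n) := hkf.div_const _
  have h_half : Summable fun k : ℤ => f k / 2 := hf.div_const _
  refine ⟨((h_div.add h_mul).sub h_half).congr fun k => (hdecomp k).symm, ?_⟩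
  rw [tsum_congr hdecomp, (h_div.add h_mul).tsum_sub h_half, h_div.tsum_add h_mul, tsum_mul_left,
    tsum_div_const, tsum_div_const, hodd_div.tsum_eq_zero, hodd_mul.tsum_eq_zero]
  ring
end

section
/- Let k > 0 and let f(ξ,T) = 3k² sech²( (k/2)(ξ − k²T/2) ), where sech y = 1/cosh y, be the KdV solitary wave. Define w(ξ,T) = −(3/8) k⁴ T ∂_ξ f(ξ,T) + k² f(ξ,T). Then w satisfies the inhomogeneous linearized KdV equation 2 ∂_T w + ∂_ξ³ w + ∂_ξ( f w ) = (k⁴/4) ∂_ξ f − k² ∂_ξ³ f at every point (ξ,T). (This is the explicit particular solution of the first-order correction equation around the soliton.) -/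
/-!
The soliton is a travelling wave `f(ξ,T) = φ(ξ - cT)` with `c = k²/2`, and `φ = 3k² sech²(k·/2)`
satisfies `φ'' + φ²/2 = k²φ`, hence the KdV profile equation `φ''' + φφ' = 2cφ'`.
For `w = aT ∂_ξ f + b f`, the terms of `2∂_T w + ∂_ξ³ w + ∂_ξ(fw)` proportional to `T` are
`aT (φ''' + φφ' - 2cφ')'` and vanish; eliminating `φφ'` by the profile equation, the rest is
`(2a + 2bc) φ' - b φ'''`, which for `a = -3k⁴/8`, `b = k²` is the right-hand side.
-/

open Real

noncomputable def sechSq (y : ℝ) : ℝ := (1 / cosh y) ^ 2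

theorem contDiff_sechSq : ContDiff ℝ ⊤ sechSq :=
  (contDiff_const.div contDiff_cosh fun y => (cosh_pos y).ne').pow 2

theorem hasDerivAt_sechSq (y : ℝ) : HasDerivAt sechSq (-2 * sinh y / cosh y ^ 3) y := by
  have hc := (cosh_pos y).ne'
  refine (((hasDerivAt_const y (1 : ℝ)).fun_div (hasDerivAt_cosh y) hc).fun_pow 2).congr_deriv ?_
  norm_num
  field_simp

theorem iteratedDeriv_two_sechSq (y : ℝ) :
    iteratedDeriv 2 sechSq y = 4 * sechSq y - 6 * sechSq y ^ 2 := by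
  have hc := (cosh_pos y).ne'
  have hderiv : deriv sechSq = fun z => -2 * sinh z / cosh z ^ 3 :=
    funext fun z => (hasDerivAt_sechSq z).deriv
  have h := ((hasDerivAt_sinh y).const_mul (-2)).fun_div ((hasDerivAt_cosh y).fun_pow 3)
    (pow_ne_zero 3 hc)
  rw [iteratedDeriv_succ, iteratedDeriv_one, hderiv, h.deriv, sechSq]
  field_simp
  linear_combination (-6 * cosh y ^ 2) * cosh_sq_sub_sinh_sq y

noncomputable def solitonProfile (k x : ℝ) : ℝ := 3 * k ^ 2 * sechSq (k / 2 * x)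

theorem contDiff_solitonProfile (k : ℝ) : ContDiff ℝ ⊤ (solitonProfile k) :=
  contDiff_const.mul (contDiff_sechSq.comp (contDiff_const.mul contDiff_id))

theorem iteratedDeriv_two_solitonProfile (k x : ℝ) :
    iteratedDeriv 2 (solitonProfile k) x + solitonProfile k x ^ 2 / 2
      = 2 * (k ^ 2 / 2) * solitonProfile k x := by
  have hscale :=
    iteratedDeriv_comp_const_mul (contDiff_sechSq.of_le le_top : ContDiff ℝ 2 sechSq) (k / 2)
  unfold solitonProfile
  rw [iteratedDeriv_const_mul_field, congrFun hscale, iteratedDeriv_two_sechSq]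
  ring

section KdVProfile

/-- `fun p => φ (p.1 - c * p.2)` solves KdV `2 ∂_T f + ∂_ξ³ f + f ∂_ξ f = 0` iff
`IsKdVProfile c φ`. -/
def IsKdVProfile (c : ℝ) (φ : ℝ → ℝ) : Prop :=
  ∀ x, iteratedDeriv 3 φ x + φ x * deriv φ x = 2 * c * deriv φ x

variable {φ : ℝ → ℝ} {c : ℝ}

theorem hasDerivAt_iteratedDeriv {n : ℕ} (hφ : ContDiff ℝ n φ) {m : ℕ} (hm : m < n) (x : ℝ) :
    HasDerivAt (iteratedDeriv m φ) (iteratedDeriv (m + 1) φ x) x := by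
  rw [iteratedDeriv_succ]
  exact (hφ.differentiable_iteratedDeriv m (by exact_mod_cast hm) x).hasDerivAt

theorem isKdVProfile_of_integrated (hφ : ContDiff ℝ 3 φ)
    (h : ∀ x, iteratedDeriv 2 φ x + φ x ^ 2 / 2 = 2 * c * φ x) : IsKdVProfile c φ := by
  intro x
  have h0 := (hφ.differentiable (by norm_num) x).hasDerivAt
  have h2 : HasDerivAt (iteratedDeriv 2 φ) (iteratedDeriv 3 φ x) x :=
    hasDerivAt_iteratedDeriv hφ (by norm_num) x
  have hlhs := h2.fun_add ((h0.fun_pow 2).div_const 2)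
  rw [funext h] at hlhs
  have key := hlhs.unique (h0.const_mul (2 * c))
  norm_num at key
  linear_combination key

theorem hasDerivAt_deriv_of_contDiff {n : ℕ} (hφ : ContDiff ℝ n φ) (hn : 1 < n) (x : ℝ) :
    HasDerivAt (deriv φ) (iteratedDeriv 2 φ x) x := by
  simpa only [iteratedDeriv_one] using hasDerivAt_iteratedDeriv hφ hn x

theorem IsKdVProfile.iteratedDeriv_four (h : IsKdVProfile c φ) (hφ : ContDiff ℝ 4 φ) (x : ℝ) :
    iteratedDeriv 4 φ x + deriv φ x ^ 2 + φ x * iteratedDeriv 2 φ x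
      = 2 * c * iteratedDeriv 2 φ x := by
  have h0 := (hφ.differentiable (by norm_num) x).hasDerivAt
  have h1 := hasDerivAt_deriv_of_contDiff hφ (by norm_num) x
  have h3 : HasDerivAt (iteratedDeriv 3 φ) (iteratedDeriv 4 φ x) x :=
    hasDerivAt_iteratedDeriv hφ (by norm_num) x
  have hlhs := h3.fun_add (h0.fun_mul h1)
  rw [funext h] at hlhs
  linear_combination hlhs.unique (h1.const_mul (2 * c))

theorem linearizedKdV_of_isKdVProfile (h : IsKdVProfile c φ) (hφ : ContDiff ℝ 4 φ)
    (a b : ℝ) (f w : ℝ × ℝ → ℝ) (hf : f = fun p => φ (p.1 - c * p.2))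
    (hw : w = fun p => a * p.2 * deriv (fun y => f (y, p.2)) p.1 + b * f p) (ξ T : ℝ) :
    2 * deriv (fun s => w (ξ, s)) T + iteratedDeriv 3 (fun y => w (y, T)) ξ
        + deriv (fun y => f (y, T) * w (y, T)) ξ
      = (2 * a + 2 * b * c) * deriv (fun y => f (y, T)) ξ
        - b * iteratedDeriv 3 (fun y => f (y, T)) ξ := by
  subst hf
  simp only [deriv_comp_sub_const] at hw
  subst hw
  set x := ξ - c * T
  have h0 := (hφ.differentiable (by norm_num) x).hasDerivAt
  have h1 := hasDerivAt_deriv_of_contDiff hφ (by norm_num) x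
  have hspeed : HasDerivAt (fun s => ξ - c * s) (-c) T := by
    simpa using ((hasDerivAt_id T).const_mul c).const_sub ξ
  have htime : deriv (fun s => a * s * deriv φ (ξ - c * s) + b * φ (ξ - c * s)) T
      = a * deriv φ x - a * c * T * iteratedDeriv 2 φ x - b * c * deriv φ x := by
    have := (((hasDerivAt_id T).const_mul a).fun_mul (h1.comp T hspeed)).fun_add
      ((h0.comp T hspeed).const_mul b)
    refine this.deriv.trans ?_
    simp only [mul_one, Function.comp_apply, id_eq, mul_neg]
    ring
  have hspace3 : iteratedDeriv 3 (fun y => a * T * deriv φ (y - c * T) + b * φ (y - c * T)) ξ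
      = a * T * iteratedDeriv 4 φ x + b * iteratedDeriv 3 φ x := by
    have hA : ContDiff ℝ 3 (fun z => a * T * deriv φ z) := contDiff_const.mul hφ.deriv'
    have hB : ContDiff ℝ 3 (fun z => b * φ z) := contDiff_const.mul (hφ.of_le (by norm_num))
    rw [iteratedDeriv_comp_sub_const 3 (fun z => a * T * deriv φ z + b * φ z)]
    dsimp only
    rw [iteratedDeriv_fun_add hA.contDiffAt hB.contDiffAt, iteratedDeriv_const_mul_field,
      iteratedDeriv_const_mul_field, ← iteratedDeriv_succ']
  have hprod : deriv (fun y => φ (y - c * T) * (a * T * deriv φ (y - c * T) + b * φ (y - c * T))) ξ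
      = deriv φ x * (a * T * deriv φ x + b * φ x)
        + φ x * (a * T * iteratedDeriv 2 φ x + b * deriv φ x) := by
    rw [deriv_comp_sub_const (f := fun z => φ z * (a * T * deriv φ z + b * φ z))]
    exact (h0.fun_mul ((h1.const_mul (a * T)).fun_add (h0.const_mul b))).deriv
  simp only [htime, hspace3, hprod, deriv_comp_sub_const, iteratedDeriv_comp_sub_const]
  linear_combination (a * T) * h.iteratedDeriv_four hφ x + 2 * b * h x

end KdVProfile

theorem linearized_KdV_particular_solution_general
    (k : ℝ) (f w : ℝ × ℝ → ℝ)
    (hf : f = fun p : ℝ × ℝ =>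
      3 * k ^ 2 * (1 / Real.cosh ((k / 2) * (p.1 - k ^ 2 * p.2 / 2))) ^ 2)
    (hw : w = fun p : ℝ × ℝ =>
      -(3 / 8) * k ^ 4 * p.2 * deriv (fun y => f (y, p.2)) p.1 + k ^ 2 * f p) :
    ∀ ξ T : ℝ,
      2 * deriv (fun s => w (ξ, s)) T
        + iteratedDeriv 3 (fun y => w (y, T)) ξ
        + deriv (fun y => f (y, T) * w (y, T)) ξ
      = (k ^ 4 / 4) * deriv (fun y => f (y, T)) ξ
        - k ^ 2 * iteratedDeriv 3 (fun y => f (y, T)) ξ := by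
  have hsmooth : ContDiff ℝ 4 (solitonProfile k) := (contDiff_solitonProfile k).of_le le_top
  have hprofile : IsKdVProfile (k ^ 2 / 2) (solitonProfile k) :=
    isKdVProfile_of_integrated (hsmooth.of_le (by norm_num)) (iteratedDeriv_two_solitonProfile k)
  have hf' : f = fun p => solitonProfile k (p.1 - k ^ 2 / 2 * p.2) := by
    rw [hf]
    funext p
    simp only [solitonProfile, sechSq]
    ring_nf
  intro ξ T
  rw [linearizedKdV_of_isKdVProfile hprofile hsmooth _ _ f w hf' hw ξ T]
  ring

/-- With f the KdV soliton f(ξ,T) = 3k² sech²((k/2)(ξ − k²T/2)),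
the function w = −(3/8)k⁴T ∂_ξ f + k² f solves the inhomogeneous linearized KdV
equation 2∂_T w + ∂_ξ³ w + ∂_ξ(fw) = (k⁴/4)∂_ξ f − k²∂_ξ³ f. -/
theorem linearized_KdV_particular_solution
    (k : ℝ) (hk : 0 < k) (f w : ℝ × ℝ → ℝ)
    (hf : f = fun p : ℝ × ℝ =>
      3 * k ^ 2 * (1 / Real.cosh ((k / 2) * (p.1 - k ^ 2 * p.2 / 2))) ^ 2)
    (hw : w = fun p : ℝ × ℝ =>
      -(3 / 8) * k ^ 4 * p.2 * deriv (fun y => f (y, p.2)) p.1 + k ^ 2 * f p) :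
    ∀ ξ T : ℝ,
      2 * deriv (fun s => w (ξ, s)) T
        + iteratedDeriv 3 (fun y => w (y, T)) ξ
        + deriv (fun y => f (y, T) * w (y, T)) ξ
      = (k ^ 4 / 4) * deriv (fun y => f (y, T)) ξ
        - k ^ 2 * iteratedDeriv 3 (fun y => f (y, T)) ξ :=
  linearized_KdV_particular_solution_general k f w hf hw
end
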